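/- arXiv:1608.04455 — 5 statements merged into one kernel-verified Lean document; each statement's English description precedes it below -/
import Mathlib

section
/- Fix real numbers t and z with z > 0 and a real d ≥ 1. The function g(c) := (1/2)((t+c)² + z²)^(d/2) + (1/2)((-t+c)² + z²)^(d/2) is strictly convex on ℝ. -/
/-!
Each summand is a positive multiple of a translate of `x ↦ (x² + a) ^ p` with `a = z² > 0` and
`p = d / 2 ≥ 1 / 2`, whose second derivative `2p (x² + a) ^ (p - 2) ((2p - 1) x² + a)` is positive.
-/

open Real Set

theorem StrictConvexOn.const_mul {𝕜 E : Type*} [Field 𝕜] [LinearOrder 𝕜] [IsStrictOrderedRing 𝕜]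
    [AddCommMonoid E] [Module 𝕜 E] {s : Set E} {f : E → 𝕜} {c : 𝕜}
    (hf : StrictConvexOn 𝕜 s f) (hc : 0 < c) : StrictConvexOn 𝕜 s fun x => c * f x :=
  ⟨hf.1, fun x hx y hy hxy a b ha hb hab => by
    calc c * f (a • x + b • y) < c * (a • f x + b • f y) :=
          mul_lt_mul_of_pos_left (hf.2 hx hy hxy ha hb hab) hc
      _ = a • (c * f x) + b • (c * f y) := by simp only [smul_eq_mul]; ring⟩

theorem hasDerivAt_rpow_sq_add {a : ℝ} (ha : 0 < a) (p x : ℝ) :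
    HasDerivAt (fun x : ℝ => (x ^ 2 + a) ^ p) (2 * p * x * (x ^ 2 + a) ^ (p - 1)) x := by
  convert ((hasDerivAt_pow 2 x).add_const a).rpow_const (p := p) (Or.inl (by positivity)) using 1
  push_cast
  ring

theorem strictConvexOn_rpow_sq_add {a p : ℝ} (ha : 0 < a) (hp : 1 / 2 ≤ p) :
    StrictConvexOn ℝ univ fun x : ℝ => (x ^ 2 + a) ^ p := by
  have hp0 : 0 < p := by linarith
  have hderiv : deriv (fun x : ℝ => (x ^ 2 + a) ^ p) = fun x => 2 * p * x * (x ^ 2 + a) ^ (p - 1) :=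
    funext fun x => (hasDerivAt_rpow_sq_add ha p x).deriv
  have hderiv2 (x : ℝ) : deriv^[2] (fun x : ℝ => (x ^ 2 + a) ^ p) x
      = 2 * p * (x ^ 2 + a) ^ (p - 2) * ((2 * p - 1) * x ^ 2 + a) := by
    have h : HasDerivAt (fun x : ℝ => 2 * p * x * (x ^ 2 + a) ^ (p - 1))
        (2 * p * 1 * (x ^ 2 + a) ^ (p - 1)
          + 2 * p * x * (2 * (p - 1) * x * (x ^ 2 + a) ^ (p - 1 - 1))) x :=
      ((hasDerivAt_id' x).const_mul (2 * p)).mul (hasDerivAt_rpow_sq_add ha (p - 1) x)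
    rw [Function.iterate_succ_apply, Function.iterate_one, hderiv, h.deriv,
      show p - 1 = p - 2 + 1 by ring, rpow_add_one (by positivity : x ^ 2 + a ≠ 0)]
    ring_nf
  refine strictConvexOn_univ_of_deriv2_pos
    ((by fun_prop : Continuous fun x : ℝ => x ^ 2 + a).rpow_const fun _ => Or.inr hp0.le)
    fun x => ?_
  have : 0 ≤ (2 * p - 1) * x ^ 2 := mul_nonneg (by linarith) (sq_nonneg x)
  rw [hderiv2]
  positivity

theorem stmt_2 (t z d : ℝ) (hz : 0 < z) (hd : 1 ≤ d) :
    StrictConvexOn ℝ Set.univ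
      (fun c : ℝ => (1 / 2) * ((t + c) ^ 2 + z ^ 2) ^ (d / 2)
        + (1 / 2) * ((-t + c) ^ 2 + z ^ 2) ^ (d / 2)) := by
  have hconv := strictConvexOn_rpow_sq_add (pow_pos hz 2) (by linarith : 1 / 2 ≤ d / 2)
  have hshift (s : ℝ) := (hconv.translate_right s).const_mul (one_half_pos (α := ℝ))
  exact (hshift t).add (hshift (-t))
end

section
/- Fix real numbers t and z with z > 0 and a real d ≥ 1. The function g(c) := (1/2)((t+c)² + z²)^(d/2) + (1/2)((-t+c)² + z²)^(d/2) is even, and strictly increasing on [0, ∞). In particular g(c) ≥ g(0) for all real c, with equality iff c = 0. -/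
/-!
With `φ x = (x ^ 2 + z ^ 2) ^ (d / 2)` we have `g c = (φ (t + c) + φ (-t + c)) / 2`. The
derivative `φ' x = d * x * (x ^ 2 + z ^ 2) ^ (d / 2 - 1)` is odd, and strictly increasing
because `d ≥ 1`; hence for `c > 0`, `φ' (t + c) + φ' (-t + c) > φ' t + φ' (-t) = 0`, so `g`
is strictly increasing on `[0, ∞)`. Evenness of `g` then gives the strict minimum at `0`.
-/

open Set

lemma strictMonoOn_Ici_comp_add_add_comp_neg_add {φ φ' : ℝ → ℝ}
    (hφ : ∀ x, HasDerivAt φ (φ' x) x) (hφ'_mono : StrictMono φ')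
    (hφ'_odd : ∀ x, φ' (-x) = -φ' x) (t : ℝ) :
    StrictMonoOn (fun c => φ (t + c) + φ (-t + c)) (Ici 0) := by
  have hderiv : ∀ c, HasDerivAt (fun c => φ (t + c) + φ (-t + c))
      (φ' (t + c) + φ' (-t + c)) c := fun c =>
    ((hφ _).comp_const_add t c).add ((hφ _).comp_const_add (-t) c)
  refine strictMonoOn_of_hasDerivWithinAt_pos (convex_Ici 0)
    (fun c _ => (hderiv c).continuousAt.continuousWithinAt)
    (fun c _ => (hderiv c).hasDerivWithinAt) fun c hc => ?_
  rw [interior_Ici, mem_Ioi] at hc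
  have h₁ : φ' t < φ' (t + c) := hφ'_mono (by linarith)
  have h₂ : φ' (-t) < φ' (-t + c) := hφ'_mono (by linarith)
  linarith [hφ'_odd t]

lemma lt_of_even_of_strictMonoOn_Ici {h : ℝ → ℝ} (heven : ∀ c, h (-c) = h c)
    (hmono : StrictMonoOn h (Ici 0)) {c : ℝ} (hc : c ≠ 0) : h 0 < h c := by
  have habs : h |c| = h c := by
    rcases abs_choice c with hc' | hc' <;> rw [hc']
    exact heven c
  rw [← habs]
  exact hmono self_mem_Ici (abs_nonneg c) (abs_pos.2 hc)

section SqAddSq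

variable {z : ℝ}

lemma sq_add_sq_pos_of_ne_zero (hz : z ≠ 0) (x : ℝ) : 0 < x ^ 2 + z ^ 2 := by
  positivity

lemma hasDerivAt_rpow_sq_add_sq (hz : z ≠ 0) (p x : ℝ) :
    HasDerivAt (fun x => (x ^ 2 + z ^ 2) ^ p) (p * 2 * (x * (x ^ 2 + z ^ 2) ^ (p - 1))) x := by
  have h := ((hasDerivAt_pow 2 x).add_const (z ^ 2)).rpow_const (p := p)
    (Or.inl (sq_add_sq_pos_of_ne_zero hz x).ne')
  convert h using 1
  push_cast
  ring

lemma hasDerivAt_mul_rpow_sq_add_sq (hz : z ≠ 0) (q x : ℝ) :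
    HasDerivAt (fun x => x * (x ^ 2 + z ^ 2) ^ q)
      ((x ^ 2 + z ^ 2) ^ (q - 1) * ((2 * q + 1) * x ^ 2 + z ^ 2)) x := by
  have hpos := sq_add_sq_pos_of_ne_zero hz x
  have hsplit : (x ^ 2 + z ^ 2) ^ q = (x ^ 2 + z ^ 2) ^ (q - 1) * (x ^ 2 + z ^ 2) := by
    rw [← Real.rpow_add_one hpos.ne', sub_add_cancel]
  refine (hasDerivAt_id' (x := x)).fun_mul (hasDerivAt_rpow_sq_add_sq hz q x) |>.congr_deriv ?_
  rw [hsplit]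
  ring

lemma strictMono_mul_rpow_sq_add_sq (hz : z ≠ 0) {q : ℝ} (hq : -1 / 2 ≤ q) :
    StrictMono fun x => x * (x ^ 2 + z ^ 2) ^ q := by
  refine strictMono_of_hasDerivAt_pos (hasDerivAt_mul_rpow_sq_add_sq hz q) fun x => ?_
  have hpos := sq_add_sq_pos_of_ne_zero hz x
  have hcoeff : 0 ≤ 2 * q + 1 := by linarith
  have hz2 : 0 < z ^ 2 := by positivity
  have hquad : 0 < (2 * q + 1) * x ^ 2 + z ^ 2 := by nlinarith [sq_nonneg x]
  exact mul_pos (Real.rpow_pos_of_pos hpos _) hquad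

end SqAddSq

theorem stmt_3 (t z d : ℝ) (hz : 0 < z) (hd : 1 ≤ d)
    (g : ℝ → ℝ)
    (hg : g = fun c : ℝ => (1 / 2) * ((t + c) ^ 2 + z ^ 2) ^ (d / 2)
        + (1 / 2) * ((-t + c) ^ 2 + z ^ 2) ^ (d / 2)) :
    (∀ c : ℝ, g (-c) = g c) ∧ StrictMonoOn g (Set.Ici 0) ∧
      (∀ c : ℝ, g 0 ≤ g c ∧ (g c = g 0 ↔ c = 0)) := by
  have heven : ∀ c, g (-c) = g c := fun c => by
    have h₁ : (t + -c) ^ 2 = (-t + c) ^ 2 := by ring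
    have h₂ : (-t + -c) ^ 2 = (t + c) ^ 2 := by ring
    simp only [hg, h₁, h₂]
    ring
  have hmono : StrictMonoOn g (Ici 0) := by
    have hφ'_mono := (strictMono_mul_rpow_sq_add_sq hz.ne' (q := d / 2 - 1) (by linarith)).const_mul
      (by linarith : (0 : ℝ) < d / 2 * 2)
    have H := strictMonoOn_Ici_comp_add_add_comp_neg_add
      (hasDerivAt_rpow_sq_add_sq hz.ne' (d / 2)) hφ'_mono (fun x => by simp) t
    intro a ha b hb hab
    have hHab := H ha hb hab
    simp only [hg] at hHab ⊢
    linarith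
  refine ⟨heven, hmono, fun c => ?_⟩
  rcases eq_or_ne c 0 with rfl | hc
  · simp
  · have hlt := lt_of_even_of_strictMonoOn_Ici heven hmono hc
    exact ⟨hlt.le, iff_of_false hlt.ne' hc⟩
end

section
/- Let K be a compact convex subset of ℝ^d containing the open ball of radius r > 0 around the origin, let u be a unit vector, y in the projection Y_u of K onto {u}^⊥, and b(y) = max{α : αu + y ∈ K}. If (δ_m) is a sequence in (0,1) with δ_m → 0, then b((1-δ_m) y) → b(y). -/
/-!
Write `z m = (1 - δ m) • y`. Convexity of `K` and `0 ∈ K` give `(1 - δ m) * b y ≤ b (z m)`, so every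
cluster point of `b (z m)` is at least `b y`. Conversely, if `b (z m)` converges along a subsequence
to `x`, then `x • u + y` is a limit of points of the closed set `K`, so `x ≤ b y`. The values
`b (z m) = ⟪u, b (z m) • u + z m⟫` lie in the compact set `⟪u, K⟫`, hence the sequence converges.
-/

open Set Filter Topology

open scoped RealInnerProductSpace

lemma Convex.smul_add_mem_of_zero_mem {E : Type*} [AddCommGroup E] [Module ℝ E] {K : Set E}
    (hK : Convex ℝ K) (h0 : (0 : E) ∈ K) {u z : E} {α t : ℝ} (h : α • u + z ∈ K)
    (ht : t ∈ Icc (0 : ℝ) 1) : (t * α) • u + t • z ∈ K := by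
  simpa [smul_add, smul_smul] using hK.smul_mem_of_zero_mem h0 h ht

section Fiber

variable {E : Type*} [NormedAddCommGroup E] [InnerProductSpace ℝ E] {K : Set E} {u z : E}

lemma inner_smul_add_eq_of_inner_eq_zero (hu : ‖u‖ = 1) (hz : ⟪z, u⟫ = 0) (α : ℝ) :
    ⟪u, α • u + z⟫ = α := by
  rw [inner_add_right, real_inner_smul_right, real_inner_self_eq_norm_sq, hu, real_inner_comm, hz]
  ring

lemma bddAbove_setOf_smul_add_mem (hK : Bornology.IsBounded K) (hu : ‖u‖ = 1)
    (hz : ⟪z, u⟫ = 0) : BddAbove {α : ℝ | α • u + z ∈ K} := by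
  refine ((innerSL ℝ u).lipschitz.isBounded_image hK).bddAbove.mono fun α hα => ?_
  exact ⟨α • u + z, hα, inner_smul_add_eq_of_inner_eq_zero hu hz α⟩

lemma sSup_smul_add_mem (hK : IsCompact K) (hu : ‖u‖ = 1) (hz : ⟪z, u⟫ = 0)
    (hne : ∃ α : ℝ, α • u + z ∈ K) : sSup {α : ℝ | α • u + z ∈ K} • u + z ∈ K :=
  (hK.isClosed.preimage (by fun_prop)).csSup_mem hne
    (bddAbove_setOf_smul_add_mem hK.isBounded hu hz)

end Fiber

theorem stmt_6 (d : ℕ) (K : Set (EuclideanSpace ℝ (Fin d)))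
    (hKc : IsCompact K) (hKconv : Convex ℝ K)
    (r : ℝ) (hr : 0 < r) (hball : Metric.ball 0 r ⊆ K)
    (u : EuclideanSpace ℝ (Fin d)) (hu : ‖u‖ = 1)
    (Yu : Set (EuclideanSpace ℝ (Fin d)))
    (hYu : Yu = {y | inner ℝ y u = (0 : ℝ) ∧ ∃ α : ℝ, α • u + y ∈ K})
    (b : EuclideanSpace ℝ (Fin d) → ℝ)
    (hb : ∀ y ∈ Yu, b y = sSup {α : ℝ | α • u + y ∈ K})
    (y : EuclideanSpace ℝ (Fin d)) (hy : y ∈ Yu)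
    (δ : ℕ → ℝ) (hδ : ∀ m, δ m ∈ Set.Ioo (0 : ℝ) 1)
    (hδ0 : Tendsto δ atTop (nhds 0)) :
    Tendsto (fun m => b ((1 - δ m) • y)) atTop (nhds (b y)) := by
  subst hYu
  obtain ⟨hyu, hyK⟩ := id hy
  have hby : b y • u + y ∈ K := hb y hy ▸ sSup_smul_add_mem hKc hu hyu hyK
  have hzu m : ⟪(1 - δ m) • y, u⟫ = 0 := by rw [real_inner_smul_left, hyu, mul_zero]
  have hlow m : ((1 - δ m) * b y) • u + (1 - δ m) • y ∈ K :=
    hKconv.smul_add_mem_of_zero_mem (hball (by simpa)) hby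
      ⟨by linarith [(hδ m).2], by linarith [(hδ m).1]⟩
  have hbz m : b ((1 - δ m) • y) = sSup {α : ℝ | α • u + (1 - δ m) • y ∈ K} :=
    hb _ ⟨hzu m, _, hlow m⟩
  have hmem m : b ((1 - δ m) • y) • u + (1 - δ m) • y ∈ K :=
    hbz m ▸ sSup_smul_add_mem hKc hu (hzu m) ⟨_, hlow m⟩
  have hge m : (1 - δ m) * b y ≤ b ((1 - δ m) • y) :=
    hbz m ▸ le_csSup (bddAbove_setOf_smul_add_mem hKc.isBounded hu (hzu m)) (hlow m)
  refine (hKc.image (innerSL ℝ u).continuous).tendsto_nhds_of_unique_mapClusterPt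
    (.of_forall fun m => ⟨_, hmem m, inner_smul_add_eq_of_inner_eq_zero hu (hzu m) _⟩)
    fun x _ hx => ?_
  obtain ⟨ψ, hψ, hxψ⟩ := hx.tendsto_subseq
  have hδψ : Tendsto (fun k => 1 - δ (ψ k)) atTop (𝓝 1) := by
    simpa using tendsto_const_nhds.sub (hδ0.comp hψ.tendsto_atTop)
  apply le_antisymm
  · have hxK : x • u + y ∈ K := hKc.isClosed.mem_of_tendsto
      (by simpa using (hxψ.smul_const u).add (hδψ.smul_const y)) (.of_forall fun k => hmem (ψ k))
    exact hb y hy ▸ le_csSup (bddAbove_setOf_smul_add_mem hKc.isBounded hu hyu) hxK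
  · exact le_of_tendsto_of_tendsto' (by simpa using hδψ.mul_const (b y)) hxψ fun k => hge (ψ k)
end

section
/- Define Q_d := ∫_{-1}^0 (1-t)^{d/2} (1-t²)^{(d-3)/2} dt for real d ≥ 3. Then Q_d ~ √π · (3√3 / (4√d)) · (32/27)^{d/2} as d → ∞, i.e., the ratio of the two sides tends to 1. -/
/-!
Laplace's method. Writing the integrand as `exp (n * ψ t) * (1 - t) ^ (3/2)` with `n = (d - 3)/2`,
the exponent `ψ` has its maximum `log (32/27)` on `(-1, 0]` at `t₀ = -1/3`, where
`ψ (t₀ + x) = log (32/27) - 27/16 * x ^ 2 + O(x ^ 3)`, and moreover `ψ t ≤ ψ t₀ - (t - t₀) ^ 2`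
throughout. After the substitution `t = t₀ + s / √n`, dominated convergence (with the Gaussian
majorant coming from the quadratic bound) gives
`√n * ∫ exp (n * (ψ t - ψ t₀)) * (1 - t) ^ (3/2) → (4/3) ^ (3/2) * √(π / (27/16))`, and the
constants combine to `1`.
-/

open Real Filter MeasureTheory Set Topology Asymptotics

section Laplace

variable {φ g : ℝ → ℝ} {a b t₀ c A M : ℝ}

theorem sqrt_mul_intervalIntegral_eq_integral_indicator (f : ℝ → ℝ) (hab : a ≤ b) {n : ℝ}
    (hn : 0 < n) (t₀ : ℝ) :
    √n * ∫ t in a..b, f t =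
      ∫ s, (Ioc (√n * (a - t₀)) (√n * (b - t₀))).indicator (fun s => f (t₀ + s / √n)) s := by
  have hn' : 0 < √n := sqrt_pos.2 hn
  rw [integral_indicator measurableSet_Ioc, ← intervalIntegral.integral_of_le (by gcongr),
    intervalIntegral.integral_comp_add_div (f := f) hn'.ne' t₀, smul_eq_mul]
  congr 3 <;> field_simp <;> ring

theorem tendsto_mul_sub_of_isLittleO
    (hφ_exp : (fun x => φ (t₀ + x) - φ t₀ + A * x ^ 2) =o[𝓝 0] fun x => x ^ 2) (s : ℝ) :
    Tendsto (fun n => n * (φ (t₀ + s / √n) - φ t₀)) atTop (𝓝 (-A * s ^ 2)) := by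
  have hx : Tendsto (fun n : ℝ => s / √n) atTop (𝓝 0) :=
    tendsto_const_nhds.div_atTop tendsto_sqrt_atTop
  have hrem := ((hφ_exp.tendsto_div_nhds_zero.comp hx).const_mul (s ^ 2)).sub_const (A * s ^ 2)
  rw [mul_zero, zero_sub, ← neg_mul] at hrem
  refine hrem.congr' ?_
  filter_upwards [eventually_gt_atTop 0] with n hn
  rcases eq_or_ne s 0 with rfl | hs
  · simp
  · have hn' : 0 < √n := sqrt_pos.2 hn
    simp only [Function.comp]
    field_simp
    rw [sq_sqrt hn.le]
    ring

theorem eventually_mem_Ioc_sqrt_mul (hat : a < t₀) (htb : t₀ < b) (s : ℝ) :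
    ∀ᶠ n in atTop, s ∈ Ioc (√n * (a - t₀)) (√n * (b - t₀)) :=
  ((tendsto_sqrt_atTop.atTop_mul_const_of_neg (sub_neg.2 hat)).eventually_lt_atBot s).and
    ((tendsto_sqrt_atTop.atTop_mul_const (sub_pos.2 htb)).eventually_ge_atTop s)

theorem abs_exp_mul_sub_mul_le (hc : 0 < c)
    (hφ_le : ∀ t ∈ Ioc a b, φ t ≤ φ t₀ - c * (t - t₀) ^ 2) (hg_le : ∀ t ∈ Ioc a b, |g t| ≤ M)
    {n s : ℝ} (hn : 0 < n) (hs : s ∈ Ioc (√n * (a - t₀)) (√n * (b - t₀))) :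
    |exp (n * (φ (t₀ + s / √n) - φ t₀)) * g (t₀ + s / √n)| ≤ M * exp (-c * s ^ 2) := by
  have hn' : 0 < √n := sqrt_pos.2 hn
  have ht : t₀ + s / √n ∈ Ioc a b := by
    constructor
    · have := (lt_div_iff₀' hn').2 hs.1
      linarith
    · have := (div_le_iff₀' hn').2 hs.2
      linarith
  have hexp : n * (φ (t₀ + s / √n) - φ t₀) ≤ -c * s ^ 2 := calc
    n * (φ (t₀ + s / √n) - φ t₀) ≤ n * (-c * (s / √n) ^ 2) := by
      gcongr
      linarith [hφ_le _ ht, show t₀ + s / √n - t₀ = s / √n by ring]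
    _ = -c * s ^ 2 := by
      rw [div_pow, sq_sqrt hn.le]
      field_simp
  rw [abs_mul, abs_exp, mul_comm]
  exact mul_le_mul (hg_le _ ht) (exp_le_exp.2 hexp) (exp_pos _).le
    ((abs_nonneg _).trans (hg_le _ ht))

theorem tendsto_sqrt_mul_laplace_integral (hat : a < t₀) (htb : t₀ < b) (hc : 0 < c)
    (hφ : Measurable φ) (hg : Measurable g)
    (hφ_le : ∀ t ∈ Ioc a b, φ t ≤ φ t₀ - c * (t - t₀) ^ 2)
    (hφ_exp : (fun x => φ (t₀ + x) - φ t₀ + A * x ^ 2) =o[𝓝 0] fun x => x ^ 2)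
    (hg_le : ∀ t ∈ Ioc a b, |g t| ≤ M) (hg_cont : ContinuousAt g t₀) :
    Tendsto (fun n => √n * ∫ t in a..b, exp (n * (φ t - φ t₀)) * g t) atTop
      (𝓝 (g t₀ * √(π / A))) := by
  set f : ℝ → ℝ → ℝ := fun n t => exp (n * (φ t - φ t₀)) * g t
  set I : ℝ → Set ℝ := fun n => Ioc (√n * (a - t₀)) (√n * (b - t₀))
  set F : ℝ → ℝ → ℝ := fun n => (I n).indicator fun s => f n (t₀ + s / √n)
  have hM : 0 ≤ M := (abs_nonneg _).trans (hg_le t₀ ⟨hat, htb.le⟩)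
  have h_meas (n : ℝ) : AEStronglyMeasurable (F n) :=
    ((by fun_prop : Measurable fun s => f n (t₀ + s / √n)).indicator
      measurableSet_Ioc).aestronglyMeasurable
  have h_bound : ∀ᶠ n in atTop, ∀ᵐ s, ‖F n s‖ ≤ M * exp (-c * s ^ 2) := by
    filter_upwards [eventually_gt_atTop 0] with n hn
    refine .of_forall fun s => ?_
    by_cases hs : s ∈ I n
    · simp only [F, norm_eq_abs]
      rw [indicator_of_mem hs]
      exact abs_exp_mul_sub_mul_le hc hφ_le hg_le hn hs
    · simp only [F]
      rw [indicator_of_notMem hs, norm_zero]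
      positivity
  have h_lim : ∀ᵐ s, Tendsto (fun n => F n s) atTop (𝓝 (exp (-A * s ^ 2) * g t₀)) := by
    refine .of_forall fun s => ?_
    have hx : Tendsto (fun n : ℝ => t₀ + s / √n) atTop (𝓝 t₀) := by
      simpa using tendsto_const_nhds.add (tendsto_const_nhds.div_atTop tendsto_sqrt_atTop)
    refine (((continuous_exp.tendsto _).comp (tendsto_mul_sub_of_isLittleO hφ_exp s)).mul
      (hg_cont.tendsto.comp hx)).congr' ?_
    filter_upwards [eventually_mem_Ioc_sqrt_mul hat htb s] with n hn
    exact (indicator_of_mem (s := I n) hn fun s => f n (t₀ + s / √n)).symm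
  have h_int := tendsto_integral_filter_of_dominated_convergence _ (.of_forall h_meas)
    h_bound ((integrable_exp_neg_mul_sq hc).const_mul M) h_lim
  rw [integral_mul_const, integral_gaussian, mul_comm] at h_int
  refine h_int.congr' ?_
  filter_upwards [eventually_gt_atTop 0] with n hn
  exact (sqrt_mul_intervalIntegral_eq_integral_indicator _ (hat.trans htb).le hn t₀).symm

end Laplace

theorem isBigO_log_one_add_sub_self :
    (fun u : ℝ => log (1 + u) - u) =O[𝓝 0] fun u => u ^ 2 := by
  refine .of_bound 2 ?_
  filter_upwards [Ioo_mem_nhds (by norm_num : (-1/2 : ℝ) < 0) (by norm_num : (0 : ℝ) < 1/2)]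
    with u hu
  have hpos : 0 < 1 + u := by linarith [hu.1]
  have hlow : u / (1 + u) ≤ log (1 + u) := by
    have := one_sub_inv_le_log_of_pos hpos
    rwa [show 1 - (1 + u)⁻¹ = u / (1 + u) by field_simp; ring] at this
  have hup : log (1 + u) ≤ u := by linarith [log_le_sub_one_of_pos hpos]
  have hgap : u - u / (1 + u) ≤ 2 * u ^ 2 := by
    rw [show u - u / (1 + u) = u ^ 2 / (1 + u) by field_simp; ring, div_le_iff₀ hpos]
    nlinarith [sq_nonneg u, hu.1]
  rw [norm_eq_abs, norm_eq_abs, abs_of_nonneg (sq_nonneg u), abs_sub_comm,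
    abs_of_nonneg (by linarith)]
  linarith

noncomputable def ψ (t : ℝ) : ℝ := 2 * log (1 - t) + log (1 + t)

theorem ψ_neg_third_add {x : ℝ} (hx₁ : -2/3 < x) (hx₂ : x < 4/3) :
    ψ (-1/3 + x) = log (32/27) + log (1 + (-27/16 * x ^ 2 + 27/32 * x ^ 3)) := by
  have h₁ : 0 < 1 - (-1/3 + x) := by linarith
  have h₂ : 0 < 1 + (-1/3 + x) := by linarith
  have hpoly : (1 - (-1/3 + x)) ^ 2 * (1 + (-1/3 + x)) =
      32/27 * (1 + (-27/16 * x ^ 2 + 27/32 * x ^ 3)) := by ring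
  have h₃ : 0 < 1 + (-27/16 * x ^ 2 + 27/32 * x ^ 3) := by
    have := mul_pos (pow_pos h₁ 2) h₂
    rw [hpoly] at this
    linarith
  rw [ψ, ← log_mul (by norm_num) h₃.ne', ← hpoly, log_mul (by positivity) h₂.ne', log_pow]
  push_cast
  ring

theorem ψ_neg_third : ψ (-1/3) = log (32/27) := by
  simpa using ψ_neg_third_add (x := 0) (by norm_num) (by norm_num)

theorem ψ_le_sub_sq {t : ℝ} (ht : t ∈ Ioc (-1) 0) : ψ t ≤ ψ (-1/3) - (t + 1/3) ^ 2 := by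
  obtain ⟨x, rfl⟩ : ∃ x, t = -1/3 + x := ⟨t + 1/3, by ring⟩
  have hx₁ : -2/3 < x := by linarith [ht.1]
  have hx₂ : x ≤ 1/3 := by linarith [ht.2]
  rw [ψ_neg_third_add hx₁ (by linarith), ψ_neg_third]
  -- `log (1 + u) ≤ u`, and `u = -27/32 * x ^ 2 * (2 - x) ≤ -x ^ 2` for `x ≤ 1/3`
  have := log_le_sub_one_of_pos (x := 1 + (-27/16 * x ^ 2 + 27/32 * x ^ 3)) (by nlinarith)
  nlinarith [sq_nonneg x]

theorem isLittleO_ψ_neg_third_add :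
    (fun x => ψ (-1/3 + x) - ψ (-1/3) + 27/16 * x ^ 2) =o[𝓝 0] fun x => x ^ 2 := by
  set u : ℝ → ℝ := fun x => -27/16 * x ^ 2 + 27/32 * x ^ 3
  have hcube : (fun x : ℝ => x ^ 3) =o[𝓝 0] fun x => x ^ 2 := isLittleO_pow_pow (by norm_num)
  have hu : u =O[𝓝 0] fun x => x ^ 2 :=
    ((isBigO_refl _ _).const_mul_left _).add (hcube.isBigO.const_mul_left _)
  have hu₀ : Tendsto u (𝓝 0) (𝓝 0) :=
    hu.trans_tendsto (by simpa using (continuous_pow 2).tendsto (0 : ℝ))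
  have hlog : (fun x => log (1 + u x) - u x) =o[𝓝 0] fun x => x ^ 2 :=
    (isBigO_log_one_add_sub_self.comp_tendsto hu₀).trans_isLittleO
      ((hu.pow 2).trans_isLittleO ((isLittleO_pow_pow (by norm_num : 2 < 4)).congr_left
        fun x => by ring))
  refine (hlog.add (hcube.const_mul_left (27/32))).congr' ?_ .rfl
  filter_upwards [Ioo_mem_nhds (by norm_num : (-2/3 : ℝ) < 0) (by norm_num : (0 : ℝ) < 4/3)]
    with x hx
  rw [ψ_neg_third_add hx.1 hx.2, ψ_neg_third]
  ring

theorem measurable_ψ : Measurable ψ := by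
  unfold ψ
  fun_prop

theorem rpow_mul_rpow_eq_exp_mul_ψ (d : ℝ) {t : ℝ} (ht : t ∈ Ioo (-1) 1) :
    (1 - t) ^ (d / 2) * (1 - t ^ 2) ^ ((d - 3) / 2) =
      exp ((d - 3) / 2 * ψ t) * (1 - t) ^ (3/2 : ℝ) := by
  have h₁ : 0 < 1 - t := by linarith [ht.2]
  have h₂ : 0 < 1 + t := by linarith [ht.1]
  rw [rpow_def_of_pos h₁, rpow_def_of_pos (by nlinarith), rpow_def_of_pos h₁,
    show 1 - t ^ 2 = (1 - t) * (1 + t) by ring, log_mul h₁.ne' h₂.ne', ← exp_add, ← exp_add, ψ]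
  ring_nf

theorem intervalIntegral_rpow_mul_rpow_eq (d : ℝ) :
    ∫ t in (-1 : ℝ)..0, (1 - t) ^ (d / 2) * (1 - t ^ 2) ^ ((d - 3) / 2) =
      (32/27) ^ ((d - 3) / 2) *
        ∫ t in (-1 : ℝ)..0, exp ((d - 3) / 2 * (ψ t - ψ (-1/3))) * (1 - t) ^ (3/2 : ℝ) := by
  rw [← intervalIntegral.integral_const_mul]
  refine intervalIntegral.integral_congr_ae (.of_forall fun t ht => ?_)
  rw [uIoc_of_le (by norm_num)] at ht
  have ht' : t ∈ Ioo (-1) 1 := ⟨ht.1, by linarith [ht.2]⟩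
  rw [rpow_mul_rpow_eq_exp_mul_ψ d ht', rpow_def_of_pos (by norm_num : (0 : ℝ) < 32/27),
    ← ψ_neg_third, ← mul_assoc, ← exp_add]
  ring_nf

theorem tendsto_sqrt_div_sqrt_half_sub_three :
    Tendsto (fun d : ℝ => √d / √((d - 3) / 2)) atTop (𝓝 √2) := by
  have h₀ : Tendsto (fun d : ℝ => 1 - 3 / d) atTop (𝓝 1) := by
    simpa using tendsto_const_nhds.sub ((tendsto_const_nhds (x := (3 : ℝ))).div_atTop tendsto_id)
  have h : Tendsto (fun d : ℝ => 2 * (1 - 3 / d)⁻¹) atTop (𝓝 2) := by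
    simpa using (h₀.inv₀ one_ne_zero).const_mul 2
  refine h.sqrt.congr' ?_
  filter_upwards [eventually_gt_atTop 3] with d hd
  rw [← sqrt_div' _ (by linarith)]
  congr 1
  field_simp

theorem laplace_constant_eq_one :
    (4/3 : ℝ) ^ (3/2 : ℝ) * √(π / (27/16)) * √2 *
      (4 / (√π * (3 * √3) * (32/27) ^ (3/2 : ℝ))) = 1 := by
  have hsq (x : ℝ) (hx : 0 ≤ x) : (x ^ (3/2 : ℝ)) ^ 2 = x ^ 3 := by
    rw [← rpow_natCast, ← rpow_mul hx]
    norm_num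
  refine (pow_eq_one_iff_of_nonneg (by positivity) two_ne_zero).1 ?_
  simp only [mul_pow, div_pow]
  rw [hsq _ (by norm_num), hsq _ (by norm_num), sq_sqrt (by positivity), sq_sqrt (by norm_num),
    sq_sqrt pi_pos.le, sq_sqrt (by norm_num)]
  field_simp
  norm_num

theorem stmt_13 (Q : ℝ → ℝ)
    (hQ : ∀ d : ℝ, 3 ≤ d →
      Q d = ∫ t in (-1 : ℝ)..0, (1 - t) ^ (d / 2) * (1 - t ^ 2) ^ ((d - 3) / 2)) :
    Tendsto (fun d : ℝ =>
        Q d / (Real.sqrt π * (3 * Real.sqrt 3 / (4 * Real.sqrt d)) * (32 / 27) ^ (d / 2)))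
      atTop (nhds 1) := by
  have hg_le (t : ℝ) (ht : t ∈ Ioc (-1) 0) : |(1 - t) ^ (3/2 : ℝ)| ≤ (2 : ℝ) ^ (3/2 : ℝ) := by
    rw [abs_of_nonneg (rpow_nonneg (by linarith [ht.2]) _)]
    exact rpow_le_rpow (by linarith [ht.2]) (by linarith [ht.1]) (by norm_num)
  have hlap := (tendsto_sqrt_mul_laplace_integral (A := 27/16) (by norm_num) (by norm_num)
    one_pos measurable_ψ (by fun_prop) (fun t ht => (ψ_le_sub_sq ht).trans_eq (by ring))
    isLittleO_ψ_neg_third_add hg_le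
    ((continuousAt_const.sub continuousAt_id).rpow_const (.inr (by norm_num)))).comp
      ((tendsto_atTop_add_const_right _ (-3) tendsto_id).atTop_div_const two_pos)
  have hlim := (hlap.mul tendsto_sqrt_div_sqrt_half_sub_three).mul_const
    (4 / (√π * (3 * √3) * (32/27) ^ (3/2 : ℝ)))
  norm_num only at hlim
  rw [laplace_constant_eq_one] at hlim
  refine hlim.congr' ?_
  filter_upwards [eventually_gt_atTop 3] with d hd
  rw [hQ d hd.le, intervalIntegral_rpow_mul_rpow_eq,
    show d / 2 = (d - 3) / 2 + 3/2 by ring, rpow_add (by norm_num)]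
  have hn : 0 < √((d - 3) / 2) := sqrt_pos.2 (by linarith)
  simp only [Function.comp_apply, id_eq, ← sub_eq_add_neg]
  field_simp
end

section
/- Define Q_d := ∫_{-1}^0 (1-t)^{d/2} (1-t²)^{(d-3)/2} dt for d ≥ 3. Then Q_d ≤ 2^{3/2} (32/27)^{(d-3)/2} · 2 for all d ≥ 3; in particular, the exponential growth rate of Q_d is at most 32/27 per unit of d/2, i.e., limsup_{d→∞} Q_d^{2/d} ≤ 32/27. -/
/-!
On `[-1, 1)` the integrand factors as `(1 - t) ^ (3/2) * ((1 - t) ^ 2 * (1 + t)) ^ ((d - 3) / 2)`.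
The cubic `(1 - t) ^ 2 * (1 + t)` attains its maximum `32/27` on `[-1, 1]` at `t = -1/3`, and
`1 - t ≤ 2`, so the integrand is at most `2 ^ (3/2) * (32/27) ^ ((d - 3) / 2)` on an interval of
length one. A bound `A * B ^ (d / 2)` gives `limsup (Q d) ^ (2 / d) ≤ B` because `A ^ (2 / d) → 1`.
-/

open Real Filter MeasureTheory Topology

lemma one_sub_sq_mul_one_add_le {t : ℝ} (ht : t ≤ 5 / 3) : (1 - t) ^ 2 * (1 + t) ≤ 32 / 27 := by
  -- `32/27 - (1 - t) ^ 2 * (1 + t) = (t + 1/3) ^ 2 * (5/3 - t)`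
  nlinarith [mul_nonneg (sq_nonneg (t + 1 / 3)) (sub_nonneg.2 ht)]

section Integrand

variable {d t : ℝ}

lemma rpow_mul_one_sub_sq_rpow_eq (ht₁ : -1 ≤ t) (ht₂ : t < 1) :
    (1 - t) ^ (d / 2) * (1 - t ^ 2) ^ ((d - 3) / 2) =
      (1 - t) ^ ((3 : ℝ) / 2) * ((1 - t) ^ 2 * (1 + t)) ^ ((d - 3) / 2) := by
  have h₁ : 0 < 1 - t := by linarith
  have h₂ : 0 ≤ 1 + t := by linarith
  rw [show 1 - t ^ 2 = (1 - t) * (1 + t) by ring, mul_rpow h₁.le h₂, mul_rpow (by positivity) h₂,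
    ← rpow_natCast, ← rpow_mul h₁.le, ← mul_assoc, ← mul_assoc, ← rpow_add h₁, ← rpow_add h₁]
  ring_nf

lemma integrand_nonneg (ht₁ : -1 ≤ t) (ht₂ : t < 1) :
    0 ≤ (1 - t) ^ (d / 2) * (1 - t ^ 2) ^ ((d - 3) / 2) := by
  rw [rpow_mul_one_sub_sq_rpow_eq ht₁ ht₂]
  have : 0 ≤ 1 + t := by linarith
  positivity

lemma integrand_le (hd : 3 ≤ d) (ht₁ : -1 ≤ t) (ht₂ : t < 1) :
    (1 - t) ^ (d / 2) * (1 - t ^ 2) ^ ((d - 3) / 2) ≤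
      2 ^ ((3 : ℝ) / 2) * (32 / 27) ^ ((d - 3) / 2) := by
  have : 0 ≤ 1 + t := by linarith
  rw [rpow_mul_one_sub_sq_rpow_eq ht₁ ht₂]
  gcongr
  · linarith
  · exact one_sub_sq_mul_one_add_le (by linarith)

lemma integral_integrand_nonneg :
    0 ≤ ∫ t in (-1 : ℝ)..0, (1 - t) ^ (d / 2) * (1 - t ^ 2) ^ ((d - 3) / 2) :=
  intervalIntegral.integral_nonneg (by norm_num) fun _ ht ↦
    integrand_nonneg ht.1 (by linarith [ht.2])

lemma integral_integrand_le (hd : 3 ≤ d) :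
    ∫ t in (-1 : ℝ)..0, (1 - t) ^ (d / 2) * (1 - t ^ 2) ^ ((d - 3) / 2) ≤
      2 ^ ((3 : ℝ) / 2) * (32 / 27) ^ ((d - 3) / 2) := by
  have h := intervalIntegral.norm_integral_le_of_norm_le_const (a := -1) (b := 0)
    (f := fun t ↦ (1 - t) ^ (d / 2) * (1 - t ^ 2) ^ ((d - 3) / 2)) fun t ht ↦ by
      rw [Set.uIoc_of_le (by norm_num)] at ht
      rw [norm_of_nonneg (integrand_nonneg ht.1.le (by linarith [ht.2]))]
      exact integrand_le hd ht.1.le (by linarith [ht.2])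
  norm_num at h
  exact (le_abs_self _).trans h

end Integrand

lemma limsup_rpow_div_le_of_le_mul_rpow {f : ℝ → ℝ} {A B c : ℝ} (hA : 0 < A) (hB : 0 < B)
    (hc : 0 < c) (hf : ∀ᶠ d in atTop, 0 ≤ f d ∧ f d ≤ A * B ^ (d / c)) :
    limsup (fun d ↦ f d ^ (c / d)) atTop ≤ B := by
  have hlim : Tendsto (fun d : ℝ ↦ A ^ (c / d) * B) atTop (𝓝 B) := by
    have h := ((continuousAt_const_rpow hA.ne').tendsto.comp
      (tendsto_id.const_div_atTop c)).mul_const B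
    simpa only [Function.comp_def, id, rpow_zero, one_mul] using h
  have hev : ∀ᶠ d in atTop, f d ^ (c / d) ≤ A ^ (c / d) * B := by
    filter_upwards [hf, eventually_gt_atTop 0] with d ⟨h₀, hle⟩ hd
    calc f d ^ (c / d) ≤ (A * B ^ (d / c)) ^ (c / d) := by gcongr
      _ = A ^ (c / d) * B := by
        rw [mul_rpow hA.le (by positivity), ← rpow_mul hB.le,
          div_mul_div_cancel₀ hc.ne', div_self hd.ne', rpow_one]
  refine (limsup_le_limsup hev ?_ hlim.isBoundedUnder_le).trans_eq hlim.limsup_eq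
  refine isCoboundedUnder_le_of_eventually_le atTop (x := 0) ?_
  filter_upwards [hf] with d hd using rpow_nonneg hd.1 _

theorem stmt_14 (Q : ℝ → ℝ)
    (hQ : ∀ d : ℝ, 3 ≤ d →
      Q d = ∫ t in (-1 : ℝ)..0, (1 - t) ^ (d / 2) * (1 - t ^ 2) ^ ((d - 3) / 2)) :
    (∀ d : ℝ, 3 ≤ d → Q d ≤ 2 ^ ((3 : ℝ) / 2) * (32 / 27) ^ ((d - 3) / 2) * 2) ∧
    limsup (fun d : ℝ => Q d ^ (2 / d)) atTop ≤ 32 / 27 := by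
  have hbound (d : ℝ) (hd : 3 ≤ d) :
      0 ≤ Q d ∧ Q d ≤ 2 ^ ((3 : ℝ) / 2) * (32 / 27) ^ ((d - 3) / 2) * 2 := by
    rw [hQ d hd]
    refine ⟨integral_integrand_nonneg, (integral_integrand_le hd).trans ?_⟩
    have : 0 ≤ 2 ^ ((3 : ℝ) / 2) * (32 / 27 : ℝ) ^ ((d - 3) / 2) := by positivity
    linarith
  refine ⟨fun d hd ↦ (hbound d hd).2, ?_⟩
  refine limsup_rpow_div_le_of_le_mul_rpow (A := 2 ^ ((3 : ℝ) / 2) * 2 / (32 / 27) ^ ((3 : ℝ) / 2))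
    (by positivity) (by norm_num) two_pos ?_
  filter_upwards [eventually_ge_atTop 3] with d hd
  refine ⟨(hbound d hd).1, (hbound d hd).2.trans_eq ?_⟩
  rw [sub_div, rpow_sub (by norm_num)]
  ring
end
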